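/- arXiv:0709.2723 — 5 statements merged into one kernel-verified Lean document; each statement's English description precedes it below -/
import Mathlib

section
/- Suppose there is a constant C > 0 such that for all large x there exist integers d, e ∈ [x^{1/4} − C·x^{1/8}, x^{1/4} + C·x^{1/8}] with d·e = x^{1/2} − 2·x^{1/4} + O(x^{1/8}). Then d·e·(d+2)·(e+2) = x + O(x^{5/8}), and the four numbers d·e, (d+2)·(e+2), d·(e+2), (d+2)·e all lie within O(x^{3/8}) of x^{1/2}. In particular, for every large x the interval [x − D·x^{5/8}, x + D·x^{5/8}] contains a (1/4, C')-almost square of type 2 for suitable constants C', D > 0. -/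
/-- An integer `n` is a `(θ, C)`-almost square of type 2. -/
def AlmostSquareType2 (n : ℤ) (θ C : ℝ) : Prop :=
  ∃ a₁ a₂ b₂ b₁ : ℤ, a₁ < a₂ ∧ a₂ ≤ b₂ ∧ b₂ < b₁ ∧
    n = a₁ * b₁ ∧ n = a₂ * b₂ ∧
    ∀ c ∈ ({a₁, a₂, b₂, b₁} : Set ℤ),
      (n : ℝ) ^ ((1:ℝ)/2) - C * (n : ℝ) ^ θ ≤ (c : ℝ) ∧
      (c : ℝ) ≤ (n : ℝ) ^ ((1:ℝ)/2) + C * (n : ℝ) ^ θ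

/-!
Put `u = x^{1/8}` and write `d = u² + α`, `e = u² + β`, `de = u⁴ - 2u² + γ` with `α, β, γ = O(u)`.
Since `(u⁴ - 2u²)(u⁴ + 2u² + 4) = u⁸ - 8u²`, the product `de(d+2)(e+2) = de · (de + 2(d+e) + 4)`
is `u⁸ + O(u⁵)`, and each of the four factors is `u⁴ + O(u²)`. For the almost-square property,
`√n = √(a₁b₁)` lies between `a₁ = de` and `b₁ = (d+2)(e+2)`, so every factor lies within
`b₁ - a₁ = 2(d+e) + 4 = O(d) = O(n^{1/4})` of `√n`.
-/

theorem almostSquareType2_of_sub_le {n a₁ a₂ b₂ b₁ : ℤ} {θ C : ℝ} (ha₁ : 0 ≤ a₁)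
    (h₁₂ : a₁ < a₂) (h₂₂ : a₂ ≤ b₂) (h₂₁ : b₂ < b₁) (hn₁ : n = a₁ * b₁) (hn₂ : n = a₂ * b₂)
    (hgap : ((b₁ - a₁ : ℤ) : ℝ) ≤ C * (n : ℝ) ^ θ) : AlmostSquareType2 n θ C := by
  refine ⟨a₁, a₂, b₂, b₁, h₁₂, h₂₂, h₂₁, hn₁, hn₂, fun c hc => ?_⟩
  have hc : a₁ ≤ c ∧ c ≤ b₁ := by
    simp only [Set.mem_insert_iff, Set.mem_singleton_iff] at hc
    omega
  obtain ⟨hc₁, hc₂⟩ : (a₁ : ℝ) ≤ c ∧ (c : ℝ) ≤ b₁ := by exact_mod_cast hc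
  have hab : (a₁ : ℝ) ≤ b₁ := by exact_mod_cast (h₁₂.trans_le h₂₂).le.trans h₂₁.le
  have hn : (n : ℝ) = a₁ * b₁ := by exact_mod_cast hn₁
  obtain ⟨hs₁, hs₂⟩ : (a₁ : ℝ) ≤ (n : ℝ) ^ ((1:ℝ)/2) ∧ (n : ℝ) ^ ((1:ℝ)/2) ≤ b₁ := by
    have ha : (0 : ℝ) ≤ a₁ := by exact_mod_cast ha₁
    rw [← Real.sqrt_eq_rpow, hn]
    exact ⟨Real.le_sqrt_of_sq_le (by nlinarith), Real.sqrt_le_iff.2 ⟨by linarith, by nlinarith⟩⟩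
  push_cast at hgap
  constructor <;> linarith

theorem almostSquareType2_mul_mul_add_two {d e : ℤ} (hd : 1 ≤ d) (he : 1 ≤ e)
    (hde : d ≤ 2 * e) (hed : e ≤ 2 * d) :
    AlmostSquareType2 (d * e * (d + 2) * (e + 2)) (1/4) 10 := by
  wlog hle : d ≤ e generalizing d e
  · simpa only [mul_comm, mul_left_comm, mul_assoc] using this he hd hed hde (by omega)
  refine almostSquareType2_of_sub_le (a₁ := d * e) (a₂ := d * (e + 2)) (b₂ := (d + 2) * e)
    (b₁ := (d + 2) * (e + 2)) (by positivity)
    (by nlinarith) (by nlinarith) (by nlinarith) (by ring) (by ring) ?_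
  have hn : (d : ℝ) ^ (4 : ℝ) ≤ ((d * e * (d + 2) * (e + 2) : ℤ) : ℝ) := by
    rw [show ((4 : ℝ)) = ((4 : ℕ) : ℝ) by norm_num, Real.rpow_natCast]
    have : d ^ 4 ≤ d * e * (d + 2) * (e + 2) := calc
      d ^ 4 = d * d * d * d := by ring
      _ ≤ d * e * (d + 2) * (e + 2) := by gcongr <;> omega
    exact_mod_cast this
  have h := (Real.le_rpow_inv_iff_of_pos (by positivity) (by positivity) (by norm_num)).2 hn
  rw [show ((4 : ℝ))⁻¹ = 1/4 by norm_num] at h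
  have hgap : (d + 2) * (e + 2) - d * e ≤ 10 * d := by nlinarith
  have : (((d + 2) * (e + 2) - d * e : ℤ) : ℝ) ≤ 10 * d := by exact_mod_cast hgap
  linarith

theorem pow_rpow_of_mul_eq {u q : ℝ} {n k : ℕ} (hu : 0 ≤ u) (hq : q * n = k) :
    (u ^ n) ^ q = u ^ k := by
  rw [← Real.rpow_natCast u n, ← Real.rpow_mul hu, mul_comm, hq, Real.rpow_natCast]

section
variable {u K d e : ℝ}

theorem abs_mul_sub_pow_four_le (hde : |d * e - (u ^ 4 - 2 * u ^ 2)| ≤ K * u) :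
    |d * e - u ^ 4| ≤ K * u + 2 * u ^ 2 := by
  rw [abs_le] at *
  constructor <;> nlinarith [sq_nonneg u]

theorem abs_mul_add_two_sub_pow_four_le (hd : |d - u ^ 2| ≤ K * u)
    (hde : |d * e - (u ^ 4 - 2 * u ^ 2)| ≤ K * u) : |d * (e + 2) - u ^ 4| ≤ 3 * K * u := by
  rw [abs_le] at *
  constructor <;> nlinarith

theorem abs_add_two_mul_add_two_sub_pow_four_le (hd : |d - u ^ 2| ≤ K * u)
    (he : |e - u ^ 2| ≤ K * u) (hde : |d * e - (u ^ 4 - 2 * u ^ 2)| ≤ K * u) :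
    |(d + 2) * (e + 2) - u ^ 4| ≤ 5 * K * u + 2 * u ^ 2 + 4 := by
  rw [abs_le] at *
  constructor <;> nlinarith

theorem abs_mul_mul_add_two_mul_add_two_sub_pow_eight_le (hu : 1 ≤ u) (hKu : K ≤ u)
    (hd : |d - u ^ 2| ≤ K * u) (he : |e - u ^ 2| ≤ K * u)
    (hde : |d * e - (u ^ 4 - 2 * u ^ 2)| ≤ K * u) :
    |d * e * (d + 2) * (e + 2) - u ^ 8| ≤ (17 * K + 8) * u ^ 5 := by
  set γ := d * e - (u ^ 4 - 2 * u ^ 2)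
  set σ := (d - u ^ 2) + (e - u ^ 2)
  have hσ : |σ| ≤ 2 * K * u := by linarith [abs_add_le (d - u ^ 2) (e - u ^ 2)]
  have hK : 0 ≤ K := nonneg_of_mul_nonneg_left ((abs_nonneg _).trans hd) (by linarith)
  have hu2 : 1 ≤ u ^ 2 := one_le_pow₀ hu
  have hKu2 : K * u ≤ u ^ 2 := by nlinarith
  have hu4 : u ^ 2 ≤ u ^ 4 := by nlinarith
  have hQ : |u ^ 4 + 2 * u ^ 2 + 4 + γ + 2 * σ| ≤ 12 * u ^ 4 := by
    rw [abs_le] at *; constructor <;> nlinarith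
  have hq : |u ^ 4 - 2 * u ^ 2| ≤ u ^ 4 := by
    rw [abs_le]; constructor <;> nlinarith
  have key : d * e * (d + 2) * (e + 2) - u ^ 8 = -(8 * u ^ 2)
      + γ * (u ^ 4 + 2 * u ^ 2 + 4 + γ + 2 * σ) + (u ^ 4 - 2 * u ^ 2) * (γ + 2 * σ) := by
    simp only [γ, σ]; ring
  have hγσ : |γ + 2 * σ| ≤ K * u + 2 * (2 * K * u) := by
    rw [abs_le] at *; constructor <;> linarith
  calc |d * e * (d + 2) * (e + 2) - u ^ 8|
      ≤ |-(8 * u ^ 2)| + |γ * (u ^ 4 + 2 * u ^ 2 + 4 + γ + 2 * σ)|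
          + |(u ^ 4 - 2 * u ^ 2) * (γ + 2 * σ)| := key ▸ abs_add_three _ _ _
    _ ≤ 8 * u ^ 2 + K * u * (12 * u ^ 4) + u ^ 4 * (K * u + 2 * (2 * K * u)) := by
        rw [abs_neg, abs_of_nonneg (by positivity), abs_mul, abs_mul]
        gcongr
    _ ≤ (17 * K + 8) * u ^ 5 := by
        nlinarith [pow_le_pow_right₀ hu (by norm_num : 2 ≤ 5)]

theorem one_le_of_abs_sub_sq_le (hu : 2 ≤ u) (hKu : 4 * K ≤ u) (hd : |d - u ^ 2| ≤ K * u) :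
    1 ≤ d := by
  rw [abs_le] at hd
  nlinarith

theorem le_two_mul_of_abs_sub_sq_le (hu : 0 ≤ u) (hKu : 4 * K ≤ u) (hd : |d - u ^ 2| ≤ K * u)
    (he : |e - u ^ 2| ≤ K * u) : e ≤ 2 * d := by
  rw [abs_le] at hd he
  nlinarith

end

theorem g_quarter_le_five_eighths (C : ℝ) (hC : C > 0) (x0 : ℝ)
    (hyp : ∀ x : ℝ, x ≥ x0 → ∃ d e : ℤ,
      x ^ ((1:ℝ)/4) - C * x ^ ((1:ℝ)/8) ≤ (d : ℝ) ∧
      (d : ℝ) ≤ x ^ ((1:ℝ)/4) + C * x ^ ((1:ℝ)/8) ∧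
      x ^ ((1:ℝ)/4) - C * x ^ ((1:ℝ)/8) ≤ (e : ℝ) ∧
      (e : ℝ) ≤ x ^ ((1:ℝ)/4) + C * x ^ ((1:ℝ)/8) ∧
      |(d : ℝ) * e - (x ^ ((1:ℝ)/2) - 2 * x ^ ((1:ℝ)/4))| ≤ C * x ^ ((1:ℝ)/8)) :
    ∃ C' D E : ℝ, C' > 0 ∧ D > 0 ∧ E > 0 ∧ ∃ x1 : ℝ, ∀ x : ℝ, x ≥ x1 →
      (∃ d e : ℤ,
        x ^ ((1:ℝ)/4) - C * x ^ ((1:ℝ)/8) ≤ (d : ℝ) ∧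
        (d : ℝ) ≤ x ^ ((1:ℝ)/4) + C * x ^ ((1:ℝ)/8) ∧
        x ^ ((1:ℝ)/4) - C * x ^ ((1:ℝ)/8) ≤ (e : ℝ) ∧
        (e : ℝ) ≤ x ^ ((1:ℝ)/4) + C * x ^ ((1:ℝ)/8) ∧
        |((d : ℝ) * e * (d + 2) * (e + 2)) - x| ≤ E * x ^ ((5:ℝ)/8) ∧
        |(d : ℝ) * e - x ^ ((1:ℝ)/2)| ≤ E * x ^ ((3:ℝ)/8) ∧
        |((d : ℝ) + 2) * (e + 2) - x ^ ((1:ℝ)/2)| ≤ E * x ^ ((3:ℝ)/8) ∧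
        |(d : ℝ) * (e + 2) - x ^ ((1:ℝ)/2)| ≤ E * x ^ ((3:ℝ)/8) ∧
        |((d : ℝ) + 2) * e - x ^ ((1:ℝ)/2)| ≤ E * x ^ ((3:ℝ)/8)) ∧
      ∃ n : ℤ, |(n : ℝ) - x| ≤ D * x ^ ((5:ℝ)/8) ∧ AlmostSquareType2 n (1/4) C' := by
  refine ⟨10, 17 * C + 8, 17 * C + 8, by norm_num, by positivity, by positivity,
    max x0 ((4 * C + 2) ^ 8), fun x hx => ?_⟩
  have hx0 : 0 ≤ x :=
    (by positivity : (0 : ℝ) ≤ (4 * C + 2) ^ 8).trans ((le_max_right _ _).trans hx)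
  obtain ⟨u, hu0, rfl⟩ : ∃ u : ℝ, 0 ≤ u ∧ x = u ^ 8 :=
    ⟨x ^ ((8 : ℕ)⁻¹ : ℝ), by positivity, (Real.rpow_inv_natCast_pow hx0 (by norm_num)).symm⟩
  have hu : 4 * C + 2 ≤ u :=
    (pow_le_pow_iff_left₀ (by positivity) hu0 (by norm_num)).1 ((le_max_right _ _).trans hx)
  obtain ⟨d, e, hd₁, hd₂, he₁, he₂, hde⟩ := hyp _ ((le_max_left _ _).trans hx)
  have hpow (q : ℝ) (k : ℕ) (hq : q * 8 = k) : (u ^ 8) ^ q = u ^ k :=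
    pow_rpow_of_mul_eq hu0 (by exact_mod_cast hq)
  simp only [hpow (1 / 8) 1 (by norm_num), hpow (1 / 4) 2 (by norm_num),
    hpow (3 / 8) 3 (by norm_num), hpow (1 / 2) 4 (by norm_num), hpow (5 / 8) 5 (by norm_num),
    pow_one] at hd₁ hd₂ he₁ he₂ hde ⊢
  have hd : |(d : ℝ) - u ^ 2| ≤ C * u := abs_sub_le_iff.2 ⟨by linarith, by linarith⟩
  have he : |(e : ℝ) - u ^ 2| ≤ C * u := abs_sub_le_iff.2 ⟨by linarith, by linarith⟩
  have hu1 : 1 ≤ u := by linarith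
  have hCu : 0 ≤ C * u := by positivity
  have hu23 : u ^ 2 ≤ u ^ 3 := pow_le_pow_right₀ hu1 (by norm_num)
  have hE (c : ℝ) (hc : |c - u ^ 4| ≤ 5 * C * u + 2 * u ^ 2 + 4) :
      |c - u ^ 4| ≤ (17 * C + 8) * u ^ 3 :=
    hc.trans (by nlinarith)
  have hN := abs_mul_mul_add_two_mul_add_two_sub_pow_eight_le hu1 (by linarith) hd he hde
  refine ⟨⟨d, e, hd₁, hd₂, he₁, he₂, hN,
    hE _ ((abs_mul_sub_pow_four_le hde).trans (by linarith)),
    hE _ (abs_add_two_mul_add_two_sub_pow_four_le hd he hde),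
    hE _ ((abs_mul_add_two_sub_pow_four_le hd hde).trans (by nlinarith)),
    hE _ ?_⟩, d * e * (d + 2) * (e + 2), by push_cast; exact hN, ?_⟩
  · rw [mul_comm] at hde ⊢
    exact (abs_mul_add_two_sub_pow_four_le he hde).trans (by nlinarith)
  · exact almostSquareType2_mul_mul_add_two
      (by exact_mod_cast one_le_of_abs_sub_sq_le (by linarith) (by linarith) hd)
      (by exact_mod_cast one_le_of_abs_sub_sq_le (by linarith) (by linarith) he)
      (by exact_mod_cast le_two_mul_of_abs_sub_sq_le hu0 (by linarith) he hd)
      (by exact_mod_cast le_two_mul_of_abs_sub_sq_le hu0 (by linarith) hd he)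
end

section
/- Let G ≤ H be positive integers with G, H ∈ [x^{1/4} − C·x^{1/16}, x^{1/4} + C·x^{1/16}] and 0 < GH − √x ≤ C·x^{1/8}. If nonnegative integers g, h ≤ C·x^{1/16} satisfy |(GH − √x)(GH + √x)/G² − (g² + h²)| ≤ C·x^{1/32}, then |x − (G − g)(G + g)(H − h)(H + h)| ≤ C'·x^{17/32} for some constant C' depending only on C. -/
/-!
With `E = (G²H² - x)/G² - (g² + h²)` one has
`x - (G² - g²)(H² - h²) = -G²E + g²(H² - G²) - g²h²`.
Since `G ≤ H` lie in a window of width `O(x^{1/16})` around `x^{1/4}`, the three terms are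
`O(x^{1/2} · x^{1/32})`, `O(x^{1/8} · x^{1/16} · x^{1/4})` and `O(x^{1/4})`, all `O(x^{17/32})`.
In the variable `t = x^{1/32}` every exponent becomes a natural number.
-/

theorem sub_mul_sub_sq_eq {K : Type*} [Field K] {x G H g h : K} (hG : G ≠ 0) :
    x - (G - g) * (G + g) * ((H - h) * (H + h)) =
      -(G ^ 2 * ((G ^ 2 * H ^ 2 - x) / G ^ 2 - (g ^ 2 + h ^ 2)))
        + g ^ 2 * (H ^ 2 - G ^ 2) - g ^ 2 * h ^ 2 := by
  field_simp
  ring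

theorem abs_sub_mul_sub_sq_le {K : Type*} [Field K] [LinearOrder K] [IsStrictOrderedRing K]
    {x G H g h a δ ε : K} (hG : 0 < G) (hGH : G ≤ H) (hGlo : a - δ ≤ G) (hHhi : H ≤ a + δ)
    (hg₀ : 0 ≤ g) (hg : g ≤ δ) (hh₀ : 0 ≤ h) (hh : h ≤ δ)
    (hE : |(G ^ 2 * H ^ 2 - x) / G ^ 2 - (g ^ 2 + h ^ 2)| ≤ ε) :
    |x - (G - g) * (G + g) * ((H - h) * (H + h))| ≤
      (a + δ) ^ 2 * ε + 4 * δ ^ 3 * (a + δ) + δ ^ 4 := by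
  set E := (G ^ 2 * H ^ 2 - x) / G ^ 2 - (g ^ 2 + h ^ 2)
  have hGhi : G ≤ a + δ := hGH.trans hHhi
  have hHG₀ : 0 ≤ H ^ 2 - G ^ 2 := sub_nonneg.mpr (pow_le_pow_left₀ hG.le hGH 2)
  have hHG : H ^ 2 - G ^ 2 ≤ 2 * δ * (2 * (a + δ)) := by
    rw [show H ^ 2 - G ^ 2 = (H - G) * (H + G) by ring]
    have : 0 ≤ H - G := sub_nonneg.mpr hGH
    gcongr <;> linarith
  calc |x - (G - g) * (G + g) * ((H - h) * (H + h))|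
      = |-(G ^ 2 * E) + g ^ 2 * (H ^ 2 - G ^ 2) - g ^ 2 * h ^ 2| := by
        rw [sub_mul_sub_sq_eq hG.ne']
    _ ≤ |-(G ^ 2 * E)| + |g ^ 2 * (H ^ 2 - G ^ 2)| + |g ^ 2 * h ^ 2| :=
        (abs_sub _ _).trans (add_le_add_left (abs_add_le _ _) _)
    _ = G ^ 2 * |E| + g ^ 2 * (H ^ 2 - G ^ 2) + g ^ 2 * h ^ 2 := by
        rw [abs_neg, abs_mul, abs_of_nonneg (sq_nonneg G),
          abs_of_nonneg (mul_nonneg (sq_nonneg g) hHG₀),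
          abs_of_nonneg (by positivity : 0 ≤ g ^ 2 * h ^ 2)]
    _ ≤ (a + δ) ^ 2 * ε + δ ^ 2 * (2 * δ * (2 * (a + δ))) + δ ^ 2 * δ ^ 2 := by gcongr
    _ = (a + δ) ^ 2 * ε + 4 * δ ^ 3 * (a + δ) + δ ^ 4 := by ring

theorem error_bound_le_mul_pow_seventeen {C t : ℝ} (hC : 0 ≤ C) (ht : 1 ≤ t) :
    (t ^ 8 + C * t ^ 2) ^ 2 * (C * t) + 4 * (C * t ^ 2) ^ 3 * (t ^ 8 + C * t ^ 2)
      + (C * t ^ 2) ^ 4 ≤ 6 * (1 + C) ^ 4 * t ^ 17 := by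
  have hD : 1 ≤ 1 + C := by linarith
  have h8 : t ^ 8 + C * t ^ 2 ≤ (1 + C) * t ^ 8 := by
    have : t ^ 2 ≤ t ^ 8 := pow_le_pow_right₀ ht (by norm_num)
    nlinarith
  calc (t ^ 8 + C * t ^ 2) ^ 2 * (C * t) + 4 * (C * t ^ 2) ^ 3 * (t ^ 8 + C * t ^ 2)
        + (C * t ^ 2) ^ 4
      ≤ ((1 + C) * t ^ 8) ^ 2 * ((1 + C) * t) + 4 * ((1 + C) * t ^ 2) ^ 3 * ((1 + C) * t ^ 8)
        + ((1 + C) * t ^ 2) ^ 4 := by gcongr <;> linarith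
    _ = (1 + C) ^ 3 * t ^ 17 + 4 * ((1 + C) ^ 4 * t ^ 14) + (1 + C) ^ 4 * t ^ 8 := by ring
    _ ≤ (1 + C) ^ 4 * t ^ 17 + 4 * ((1 + C) ^ 4 * t ^ 17) + (1 + C) ^ 4 * t ^ 17 := by
        gcongr <;> first | exact hD | norm_num
    _ = 6 * (1 + C) ^ 4 * t ^ 17 := by ring

theorem quadratic_form_approx_step (C : ℝ) (hC : C > 0) :
    ∃ C' : ℝ, C' > 0 ∧ ∃ x0 : ℝ, ∀ x : ℝ, x ≥ x0 →
      ∀ G H : ℤ, 0 < G → G ≤ H →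
        x ^ ((1:ℝ)/4) - C * x ^ ((1:ℝ)/16) ≤ (G : ℝ) →
        (G : ℝ) ≤ x ^ ((1:ℝ)/4) + C * x ^ ((1:ℝ)/16) →
        x ^ ((1:ℝ)/4) - C * x ^ ((1:ℝ)/16) ≤ (H : ℝ) →
        (H : ℝ) ≤ x ^ ((1:ℝ)/4) + C * x ^ ((1:ℝ)/16) →
        0 < (G : ℝ) * H - Real.sqrt x →
        (G : ℝ) * H - Real.sqrt x ≤ C * x ^ ((1:ℝ)/8) →
        ∀ g h : ℕ, (g : ℝ) ≤ C * x ^ ((1:ℝ)/16) → (h : ℝ) ≤ C * x ^ ((1:ℝ)/16) →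
          |((G : ℝ) * H - Real.sqrt x) * ((G : ℝ) * H + Real.sqrt x) / (G : ℝ) ^ 2 -
              ((g : ℝ) ^ 2 + (h : ℝ) ^ 2)| ≤ C * x ^ ((1:ℝ)/32) →
          |x - ((G : ℝ) - g) * ((G : ℝ) + g) * (((H : ℝ) - h) * ((H : ℝ) + h))| ≤
            C' * x ^ ((17:ℝ)/32) := by
  refine ⟨6 * (1 + C) ^ 4, by positivity, 1, ?_⟩
  intro x hx G H hG hGH hGlo _ _ hHhi _ _ g h hg hh hE
  have hx₀ : 0 ≤ x := zero_le_one.trans hx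
  have h4 : x ^ ((1:ℝ)/4) = (x ^ ((1:ℝ)/32)) ^ 8 := by
    rw [← Real.rpow_mul_natCast hx₀]; norm_num
  have h16 : x ^ ((1:ℝ)/16) = (x ^ ((1:ℝ)/32)) ^ 2 := by
    rw [← Real.rpow_mul_natCast hx₀]; norm_num
  have h1732 : x ^ ((17:ℝ)/32) = (x ^ ((1:ℝ)/32)) ^ 17 := by
    rw [← Real.rpow_mul_natCast hx₀]; norm_num
  have hsqrt : ((G : ℝ) * H - √x) * (G * H + √x) = G ^ 2 * H ^ 2 - x := by
    linear_combination -Real.sq_sqrt hx₀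
  rw [h4, h16] at hGlo hHhi
  rw [h16] at hg hh
  rw [hsqrt] at hE
  rw [h1732]
  exact (abs_sub_mul_sub_sq_le (by exact_mod_cast hG) (by exact_mod_cast hGH) hGlo hHhi
    g.cast_nonneg hg h.cast_nonneg hh hE).trans
      (error_bound_le_mul_pow_seventeen hC.le (Real.one_le_rpow hx (by norm_num)))
end

section
/- For all sufficiently large real x and every θ with 5/16 ≤ θ ≤ 1/2, there exist constants C', C'' > 0 (independent of x) and an integer n with |n − x| ≤ C''·x^{17/32} such that n is a (θ, C')-almost square of type 2. -/
/-!
Write `x = t³²`. Choose integers `G, H ≍ t⁸` with `0 ≤ GH - t¹⁶ ≤ 7t⁴`, so that `T = (GH)² - x` is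
`O(t²⁰)`. Approximating `T` greedily by `(Gg)² + (Hh)²` (first `Gg ≈ √T`, then `Hh ≈ √(T - (Gg)²)`)
leaves an error `O(t¹⁷)`, with `g = O(t²)` and `h = O(t)`. Hence
`n = (G² - h²)(H² - g²) = x + T - (Gg)² - (Hh)² + (gh)²` lies within `O(t¹⁷)` of `x`, and its two
factorizations `((G - h)(H - g)) ((G + h)(H + g)) = ((G - h)(H + g)) ((G + h)(H - g))` have all four
factors within `Gg + Hh + gh = O(t¹⁰) = O(x^(5/16))` of `GH`, hence of `√n`.
-/

theorem exists_mul_sq_approx (y : ℝ) {G : ℤ} (hG : 0 < G) :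
    ∃ g : ℤ, 0 < g ∧ (G * g : ℝ) ≤ √y + G ∧
      min y 0 - G ^ 2 ≤ y - (G * g) ^ 2 ∧ y - (G * g) ^ 2 ≤ 2 * G * √y := by
  have hG' : (0 : ℝ) < G := by exact_mod_cast hG
  by_cases hGy : (G : ℝ) ≤ √y
  · have hy : 0 ≤ y := by
      by_contra! hy
      rw [Real.sqrt_eq_zero_of_nonpos hy.le] at hGy
      linarith
    set g := ⌊√y / G⌋
    have hle : (G * g : ℝ) ≤ √y := by
      have := Int.floor_le (√y / G)
      rwa [le_div_iff₀ hG', mul_comm] at this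
    have hlt : √y < G * g + G := by
      have := Int.lt_floor_add_one (√y / G)
      rwa [div_lt_iff₀ hG', add_mul, one_mul, mul_comm] at this
    have hg : (0 : ℝ) < g := by nlinarith
    refine ⟨g, by exact_mod_cast hg, by linarith, ?_, ?_⟩
    · rw [min_eq_right hy]; nlinarith [Real.sq_sqrt hy]
    · nlinarith [Real.sq_sqrt hy]
  · push Not at hGy
    have hyG : y ≤ G ^ 2 := by
      rcases le_total 0 y with hy | hy
      · nlinarith [Real.sq_sqrt hy, Real.sqrt_nonneg y]
      · nlinarith
    refine ⟨1, one_pos, ?_, ?_, ?_⟩ <;> push_cast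
    · linarith [Real.sqrt_nonneg y]
    · linarith [min_le_left y 0]
    · nlinarith [Real.sqrt_nonneg y]

theorem exists_sq_add_sq_approx {y : ℝ} (hy : 0 ≤ y) {G H : ℤ} (hG : 0 < G) (hH : 0 < H) :
    ∃ g h : ℤ, 0 < g ∧ 0 < h ∧ (G * g : ℝ) ≤ √y + G ∧ (H * h : ℝ) ≤ √(2 * G * √y) + H ∧
      -(G ^ 2 + H ^ 2 : ℝ) ≤ y - (G * g) ^ 2 - (H * h) ^ 2 ∧
      y - (G * g) ^ 2 - (H * h) ^ 2 ≤ 2 * H * √(2 * G * √y) := by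
  obtain ⟨g, hg, hGg, hlo, hhi⟩ := exists_mul_sq_approx y hG
  obtain ⟨h, hh, hHh, hlo', hhi'⟩ := exists_mul_sq_approx (y - (G * g) ^ 2) hH
  have hsqrt := Real.sqrt_le_sqrt hhi
  have hH' : (0 : ℝ) ≤ H := by exact_mod_cast hH.le
  rw [min_eq_right hy] at hlo
  refine ⟨g, h, hg, hh, hGg, by linarith, ?_, by nlinarith⟩
  have hmin : 0 - (G : ℝ) ^ 2 ≤ min (y - (G * g) ^ 2) 0 := le_min hlo (by nlinarith)
  linarith

theorem exists_mul_near_pow_four {τ : ℝ} (hτ : 4 ≤ τ) :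
    ∃ G H : ℤ, τ ^ 2 / 2 ≤ G ∧ G ≤ 2 * τ ^ 2 ∧ τ ^ 2 / 2 ≤ H ∧ H ≤ 2 * τ ^ 2 ∧
      τ ^ 4 ≤ G * H ∧ G * H ≤ τ ^ 4 + 7 * τ := by
  set s := ⌊τ ^ 2⌋₊
  have hs : (s : ℝ) ≤ τ ^ 2 := Nat.floor_le (by positivity)
  have hs' : τ ^ 2 < s + 1 := Nat.lt_floor_add_one _
  set M := 3 * s - (τ ^ 4 - s ^ 2)
  have hM : 0 ≤ M := by nlinarith
  set a := ⌊√M⌋₊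
  have ha : (a : ℝ) ≤ √M := Nat.floor_le (Real.sqrt_nonneg M)
  have ha' : √M < a + 1 := Nat.lt_floor_add_one _
  have ha0 : (0 : ℝ) ≤ a := Nat.cast_nonneg a
  have haM : (a : ℝ) ^ 2 ≤ M := by nlinarith [Real.sq_sqrt hM]
  have hMa : M < ((a : ℝ) + 1) ^ 2 := by nlinarith [Real.sq_sqrt hM, Real.sqrt_nonneg M]
  have haτ : (a : ℝ) ≤ 2 * τ := by nlinarith
  -- `(s + 2 - a) (s + 1 + a) = τ⁴ + (M - a²) + a + 2`, and `0 ≤ M - a² ≤ 2a`.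
  refine ⟨s + 2 - a, s + 1 + a, ?_, ?_, ?_, ?_, ?_, ?_⟩ <;> push_cast <;> nlinarith

theorem almostSquareType2_mul {p c₁ c₂ q : ℤ} (hp : 0 < p) (hpc₁ : p < c₁) (hpc₂ : p < c₂)
    (hc₁q : c₁ < q) (hc₂q : c₂ < q) (hpq : p * q = c₁ * c₂) {θ C m δ : ℝ}
    (hδ : ∀ c ∈ ({p, c₁, c₂, q} : Set ℤ), |(c : ℝ) - m| ≤ δ)
    (hC : 2 * δ ≤ C * ((p * q : ℤ) : ℝ) ^ θ) :
    AlmostSquareType2 (p * q) θ C := by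
  have hp' : (0 : ℝ) ≤ p := by exact_mod_cast hp.le
  have hpq' : (p : ℝ) ≤ q := by exact_mod_cast (hpc₁.trans hc₁q).le
  have hsqrt : |√((p * q : ℤ) : ℝ) - m| ≤ δ := by
    have hlo : (p : ℝ) ≤ √((p * q : ℤ) : ℝ) :=
      Real.le_sqrt_of_sq_le (by push_cast; nlinarith)
    have hhi : √((p * q : ℤ) : ℝ) ≤ q :=
      Real.sqrt_le_iff.mpr ⟨hp'.trans hpq', by push_cast; nlinarith⟩
    have := abs_le.mp (hδ p (by simp))
    have := abs_le.mp (hδ q (by simp))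
    rw [abs_le]; constructor <;> linarith
  refine ⟨p, min c₁ c₂, max c₁ c₂, q, lt_min hpc₁ hpc₂, min_le_max, max_lt hc₁q hc₂q,
    rfl, by rw [min_mul_max, hpq], fun c hc ↦ ?_⟩
  have hc : c ∈ ({p, c₁, c₂, q} : Set ℤ) := by
    rcases hc with rfl | rfl | rfl | rfl
    · simp
    · rcases min_choice c₁ c₂ with h | h <;> simp [h]
    · rcases max_choice c₁ c₂ with h | h <;> simp [h]
    · simp
  have := abs_le.mp (hδ c hc)
  rw [← Real.sqrt_eq_rpow]
  constructor <;> linarith [abs_le.mp hsqrt]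

theorem almostSquareType2_sq_sub_mul_sq_sub {G H g h : ℤ} (hg : 0 < g) (hh : 0 < h)
    (hgH : g < H) (hhG : h < G) {θ C : ℝ}
    (hC : 2 * (G * g + H * h + g * h : ℝ) ≤ C * (((G ^ 2 - h ^ 2) * (H ^ 2 - g ^ 2) : ℤ) : ℝ) ^ θ) :
    AlmostSquareType2 ((G ^ 2 - h ^ 2) * (H ^ 2 - g ^ 2)) θ C := by
  have hfac : (G ^ 2 - h ^ 2) * (H ^ 2 - g ^ 2) = (G - h) * (H - g) * ((G + h) * (H + g)) := by
    ring
  rw [hfac] at hC ⊢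
  refine almostSquareType2_mul (c₁ := (G - h) * (H + g)) (c₂ := (G + h) * (H - g))
    (m := G * H) (by nlinarith) (by nlinarith) (by nlinarith) (by nlinarith) (by nlinarith)
    (by ring) ?_ hC
  have hg' : (0 : ℝ) < g := by exact_mod_cast hg
  have hh' : (0 : ℝ) < h := by exact_mod_cast hh
  have hgH' : (g : ℝ) < H := by exact_mod_cast hgH
  have hhG' : (h : ℝ) < G := by exact_mod_cast hhG
  rintro c (rfl | rfl | rfl | rfl) <;> push_cast <;> rw [abs_le] <;> constructor <;> nlinarith

theorem pow_mul_pow_le_pow_add {c t : ℝ} (hc : 0 ≤ c) (hct : c ≤ t) (k m : ℕ) :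
    c ^ k * t ^ m ≤ t ^ (m + k) := by
  rw [pow_add, mul_comm]
  exact mul_le_mul_of_nonneg_left (pow_le_pow_left₀ hc hct k) (pow_nonneg (hc.trans hct) m)

theorem exists_mul_sq_sub_pow_le {t : ℝ} (ht : 100 ≤ t) :
    ∃ G H : ℤ, t ^ 8 / 2 ≤ G ∧ G ≤ 2 * t ^ 8 ∧ t ^ 8 / 2 ≤ H ∧ H ≤ 2 * t ^ 8 ∧
      0 ≤ (G * H : ℝ) ^ 2 - t ^ 32 ∧ (G * H : ℝ) ^ 2 - t ^ 32 ≤ (4 * t ^ 10) ^ 2 := by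
  have hpow := pow_mul_pow_le_pow_add (by norm_num) ht
  have h0_4 : 100 ^ 4 * t ^ 0 ≤ t ^ 4 := hpow _ _
  have h8_20 : 100 ^ 12 * t ^ 8 ≤ t ^ 20 := hpow _ _
  obtain ⟨G, H, hG, hG', hH, hH', hGH, hGH'⟩ :=
    exists_mul_near_pow_four (τ := t ^ 4) (by linarith)
  simp only [← pow_mul] at hG hG' hH hH' hGH hGH'
  norm_num at hG hG' hH hH' hGH hGH'
  have hsq := pow_le_pow_left₀ (by positivity) hGH 2
  have hsq' := pow_le_pow_left₀ (by linarith [pow_nonneg (by linarith : 0 ≤ t) 16]) hGH' 2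
  refine ⟨G, H, hG, hG', hH, hH', ?_, ?_⟩
  · linarith [show (t ^ 16) ^ 2 = t ^ 32 by ring]
  · linarith [show (t ^ 16 + 7 * t ^ 4) ^ 2 = t ^ 32 + 14 * t ^ 20 + 49 * t ^ 8 by ring]

theorem exists_sq_sub_mul_sq_sub_near_pow {t : ℝ} (ht : 100 ≤ t) :
    ∃ G H g h : ℤ, 0 < g ∧ 0 < h ∧ g < H ∧ h < G ∧
      |(((G ^ 2 - h ^ 2) * (H ^ 2 - g ^ 2) : ℤ) : ℝ) - t ^ 32| ≤ 21 * t ^ 17 ∧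
      (G * g + H * h + g * h : ℝ) ≤ 8 * t ^ 10 := by
  have hpow := pow_mul_pow_le_pow_add (by norm_num) ht
  have h1_8 : 100 ^ 7 * t ^ 1 ≤ t ^ 8 := hpow _ _
  have h2_8 : 100 ^ 6 * t ^ 2 ≤ t ^ 8 := hpow _ _
  have h9_10 : 100 ^ 1 * t ^ 9 ≤ t ^ 10 := hpow _ _
  have h16_17 : 100 ^ 1 * t ^ 16 ≤ t ^ 17 := hpow _ _
  obtain ⟨G, H, hG, hG', hH, hH', hy, hy'⟩ := exists_mul_sq_sub_pow_le ht
  have ht8 : 0 < t ^ 8 := by positivity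
  have hGpos : (0 : ℝ) < G := by linarith
  have hHpos : (0 : ℝ) < H := by linarith
  set y := (G * H : ℝ) ^ 2 - t ^ 32
  have hsy : √y ≤ 4 * t ^ 10 := Real.sqrt_le_iff.mpr ⟨by positivity, hy'⟩
  obtain ⟨g, h, hg, hh, hGg, hHh, hlo, hhi⟩ :=
    exists_sq_add_sq_approx hy (by exact_mod_cast hGpos) (by exact_mod_cast hHpos)
  have hsy' : √(2 * G * √y) ≤ 4 * t ^ 9 := by
    refine Real.sqrt_le_iff.mpr ⟨by positivity, ?_⟩
    nlinarith [mul_le_mul hG' hsy (Real.sqrt_nonneg y) (by positivity)]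
  have hg' : (0 : ℝ) < g := by exact_mod_cast hg
  have hh' : (0 : ℝ) < h := by exact_mod_cast hh
  have hgt : (g : ℝ) ≤ 10 * t ^ 2 := by
    have : t ^ 8 * g ≤ t ^ 8 * (10 * t ^ 2) := by nlinarith
    exact le_of_mul_le_mul_left this ht8
  have hht : (h : ℝ) ≤ 10 * t := by
    have : t ^ 8 * h ≤ t ^ 8 * (10 * t) := by nlinarith
    exact le_of_mul_le_mul_left this ht8
  have hgh : (g * h : ℝ) ≤ 100 * t ^ 3 := by nlinarith [mul_le_mul hgt hht hh'.le (by positivity)]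
  have hn : (((G ^ 2 - h ^ 2) * (H ^ 2 - g ^ 2) : ℤ) : ℝ) - t ^ 32 =
      y - (G * g) ^ 2 - (H * h) ^ 2 + (g * h) ^ 2 := by
    push_cast; ring
  refine ⟨G, H, g, h, hg, hh, ?_, ?_, ?_, ?_⟩
  · exact_mod_cast (show (g : ℝ) < H by linarith)
  · exact_mod_cast (show (h : ℝ) < G by linarith)
  · rw [hn, abs_le]
    constructor
    · nlinarith [pow_le_pow_left₀ hGpos.le hG' 2, pow_le_pow_left₀ hHpos.le hH' 2]
    · nlinarith [pow_le_pow_left₀ (by positivity) hgh 2,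
        mul_le_mul hH' hsy' (Real.sqrt_nonneg _) (by positivity)]
  · nlinarith

theorem exists_almostSquareType2_near_pow {t θ : ℝ} (ht : 100 ≤ t) (hθ : 5 / 16 ≤ θ) :
    ∃ n : ℤ, |(n : ℝ) - t ^ 32| ≤ 21 * t ^ 17 ∧ AlmostSquareType2 n θ (2 ^ 14) := by
  obtain ⟨G, H, g, h, hg, hh, hgH, hhG, hn, hD⟩ := exists_sq_sub_mul_sq_sub_near_pow ht
  refine ⟨_, hn, almostSquareType2_sq_sub_mul_sq_sub hg hh hgH hhG ?_⟩
  set n : ℝ := (((G ^ 2 - h ^ 2) * (H ^ 2 - g ^ 2) : ℤ) : ℝ)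
  have hpow := pow_mul_pow_le_pow_add (by norm_num) ht
  have hn' : (t / 2) ^ 32 ≤ n := by
    have h15 : 100 ^ 15 * t ^ 17 ≤ t ^ 32 := hpow _ _
    have := (abs_le.mp hn).1
    rw [div_pow]
    linarith [pow_nonneg (show 0 ≤ t by linarith) 17]
  have ht2 : 1 ≤ t / 2 := by linarith
  have hn1 : 1 ≤ n := (one_le_pow₀ ht2).trans hn'
  have hnθ : (t / 2) ^ 10 ≤ n ^ θ :=
    calc (t / 2) ^ 10 = ((t / 2) ^ 32) ^ ((5 : ℝ) / 16) := by
          rw [← Real.rpow_natCast (t / 2) 32, ← Real.rpow_mul (by positivity)]; norm_num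
      _ ≤ n ^ ((5 : ℝ) / 16) := Real.rpow_le_rpow (by positivity) hn' (by norm_num)
      _ ≤ n ^ θ := Real.rpow_le_rpow_of_exponent_le hn1 hθ
  rw [div_pow] at hnθ
  linarith

theorem g_le_seventeen_thirtyseconds :
    ∃ C' C'' : ℝ, C' > 0 ∧ C'' > 0 ∧ ∃ x0 : ℝ, ∀ x : ℝ, x ≥ x0 →
      ∀ θ : ℝ, 5/16 ≤ θ → θ ≤ 1/2 →
        ∃ n : ℤ, |(n : ℝ) - x| ≤ C'' * x ^ ((17:ℝ)/32) ∧ AlmostSquareType2 n θ C' := by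
  refine ⟨2 ^ 14, 21, by norm_num, by norm_num, 100 ^ 32, fun x hx θ hθ _ ↦ ?_⟩
  have hx0 : 0 ≤ x := le_trans (by positivity) hx
  set t := x ^ ((1 : ℝ) / 32)
  have ht : 100 ≤ t := by
    calc (100 : ℝ) = ((100 : ℝ) ^ 32) ^ ((1 : ℝ) / 32) := by
          rw [← Real.rpow_natCast _ 32, ← Real.rpow_mul (by norm_num)]; norm_num
      _ ≤ t := Real.rpow_le_rpow (by positivity) hx (by norm_num)
  have hpow (k : ℕ) : x ^ ((k : ℝ) / 32) = t ^ k := by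
    rw [← Real.rpow_mul_natCast hx0, one_div_mul_eq_div]
  obtain ⟨n, hn, hsq⟩ := exists_almostSquareType2_near_pow ht hθ
  refine ⟨n, ?_, hsq⟩
  have hx32 : t ^ 32 = x := by rw [← hpow 32]; norm_num
  rwa [show (17 : ℝ) / 32 = (17 : ℕ) / 32 by norm_num, hpow, ← hx32]
end

section
/- Let 1/2 < φ < 2/3. For all sufficiently large real x there exist positive integers G, H, g, h with G ∈ [x^{(1−φ)/2}/2, x^{(1−φ)/2}], H ∈ [x^{φ/2}, 3x^{φ/2}], g ≍ x^{1/2 − 3φ/4}, h ≍ x^{5φ/8 − 1/4}, such that |x − (G − g)(G + g)(H − h)(H + h)| ≤ C·x^{3/4 − 3φ/8} and all four products (G ± g)(H ± h) lie within C·x^{1/2 − φ/4} of x^{1/2}, for some constant C > 0 depending only on φ. -/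
/-!
Put `p = x ^ (1/4 - 3φ/8)` and `q = x ^ (5φ/8 - 1/4)`. Both tend to infinity because
`2/5 < φ < 2/3`, and every scale in the statement is a monomial in them: `√x = p⁵q³`,
`G ≍ p³q`, `H ≍ p²q²`, `g ≍ p²`, `h ≍ q`, `x ^ (1/2 - φ/4) = p⁴q²`, `x ^ (3/4 - 3φ/8) = p⁶q³`.

Take `G ≈ x ^ ((1-φ)/2)` and `H` with `G ≤ GH - √x ≤ 2G`, so that `L = (GH)² - x ≍ p⁸q⁴`.
Choose `g` greedily with `gH` just below `√L`, so that `M = L - g²H² ≍ H√L ≍ p⁶q⁴`, and then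
`h` with `hG` just below `√M`, so that `0 ≤ M - h²G² ≤ 2G√M ≍ p⁶q³`. Finally
`x - (G² - g²)(H² - h²) = -(M - h²G²) - g²h²` with `g²h² ≍ p⁴q²`, and each product
`(G ± g)(H ± h) - √x` is `(GH - √x) ± gH ± hG ± gh = O(p⁴q²)`.
-/

open Real Filter

lemma rpow_eq_pow_mul_pow {x s t e p q : ℝ} (hx : 0 < x) (hp : x ^ s = p) (hq : x ^ t = q)
    (a b : ℕ) (he : e = a * s + b * t) : x ^ e = p ^ a * q ^ b := by
  rw [he, rpow_add hx, mul_comm (a : ℝ), mul_comm (b : ℝ), rpow_mul_natCast hx.le,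
    rpow_mul_natCast hx.le, hp, hq]

lemma exists_int_sub_mul_mem_Icc (r : ℝ) {d : ℝ} (hd : 0 < d) (c : ℤ) :
    ∃ k : ℤ, c * d ≤ r - k * d ∧ r - k * d ≤ (c + 1) * d := by
  have h₁ := Int.floor_le (r / d)
  have h₂ := Int.lt_floor_add_one (r / d)
  have hr : r = r / d * d := (div_mul_cancel₀ r hd.ne').symm
  refine ⟨⌊r / d⌋ - c, ?_, ?_⟩ <;> push_cast <;> nlinarith

lemma sq_sub_sq_mem_Icc {r m a b : ℝ} (hm : 0 ≤ m) (ha : 0 ≤ a) (har : a ≤ r - m)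
    (hbr : r - m ≤ b) : a * r ≤ r ^ 2 - m ^ 2 ∧ r ^ 2 - m ^ 2 ≤ 2 * b * r := by
  constructor <;> nlinarith

lemma exists_int_sq_sub_mul_sq_mem_Icc {y lo hi d : ℝ} (hd : 0 < d) (c : ℕ)
    (hlo : (c + 1) * d ≤ lo) (hhi : 0 ≤ hi) (hy₁ : lo ^ 2 ≤ y) (hy₂ : y ≤ hi ^ 2) :
    ∃ k : ℤ, lo - (c + 1) * d ≤ k * d ∧ k * d ≤ hi - c * d ∧
      c * d * lo ≤ y - (k * d) ^ 2 ∧ y - (k * d) ^ 2 ≤ 2 * ((c + 1) * d) * hi := by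
  have hlo₀ : 0 ≤ lo := le_trans (by positivity) hlo
  have hy₀ : 0 ≤ y := le_trans (by positivity) hy₁
  have hr₁ : lo ≤ √y := (le_sqrt hlo₀ hy₀).mpr hy₁
  have hr₂ : √y ≤ hi := (sqrt_le_left hhi).mpr hy₂
  obtain ⟨k, hk₁, hk₂⟩ := exists_int_sub_mul_mem_Icc (√y) hd c
  push_cast at hk₁ hk₂
  obtain ⟨hN₁, hN₂⟩ := sq_sub_sq_mem_Icc (by linarith) (by positivity) hk₁ hk₂
  rw [sq_sqrt hy₀] at hN₁ hN₂
  refine ⟨k, by linarith, by linarith, ?_, ?_⟩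
  · exact le_trans (by gcongr) hN₁
  · exact hN₂.trans (by gcongr)

lemma exists_int_near_mul_above {A B : ℝ} (hA : 2 ≤ A) (hB : 2 ≤ B) :
    ∃ G H : ℤ, A / 2 ≤ G ∧ (G : ℝ) ≤ A ∧ B ≤ H ∧ (H : ℝ) ≤ 3 * B ∧
      G ≤ G * H - A * B ∧ (G : ℝ) * H - A * B ≤ 2 * G := by
  obtain ⟨G, hG₁, hG₂⟩ := exists_int_sub_mul_mem_Icc A one_pos 0
  push_cast at hG₁ hG₂
  have hG₀ : (0 : ℝ) < G := by linarith
  obtain ⟨H, hH₁, hH₂⟩ := exists_int_sub_mul_mem_Icc (A * B) hG₀ (-2)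
  push_cast at hH₁ hH₂
  refine ⟨G, H, by linarith, by linarith, ?_, ?_, by linarith, by linarith⟩
  · refine le_of_mul_le_mul_left ?_ hG₀
    nlinarith
  · refine le_of_mul_le_mul_left ?_ hG₀
    nlinarith

section Monomials

variable {p q : ℝ}

lemma exists_outer_factors (hp : 5 ≤ p) (hq : 4 ≤ q) :
    ∃ G H : ℤ, p ^ 3 * q / 2 ≤ G ∧ (G : ℝ) ≤ p ^ 3 * q ∧
      p ^ 2 * q ^ 2 ≤ H ∧ (H : ℝ) ≤ 3 * (p ^ 2 * q ^ 2) ∧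
      0 ≤ (G : ℝ) * H - p ^ 5 * q ^ 3 ∧ (G : ℝ) * H - p ^ 5 * q ^ 3 ≤ 2 * (p ^ 3 * q) ∧
      (p ^ 4 * q ^ 2 / 2) ^ 2 ≤ ((G : ℝ) * H) ^ 2 - p ^ 10 * q ^ 6 ∧
      ((G : ℝ) * H) ^ 2 - p ^ 10 * q ^ 6 ≤ (4 * (p ^ 4 * q ^ 2)) ^ 2 := by
  have hA : 2 ≤ p ^ 3 * q := by
    calc (2 : ℝ) ≤ 5 ^ 3 * 4 := by norm_num
      _ ≤ p ^ 3 * q := by gcongr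
  have hB : 2 ≤ p ^ 2 * q ^ 2 := by
    calc (2 : ℝ) ≤ 5 ^ 2 * 4 ^ 2 := by norm_num
      _ ≤ p ^ 2 * q ^ 2 := by gcongr
  obtain ⟨G, H, hG₁, hG₂, hH₁, hH₂, hGH₁, hGH₂⟩ := exists_int_near_mul_above hA hB
  rw [show p ^ 3 * q * (p ^ 2 * q ^ 2) = p ^ 5 * q ^ 3 by ring] at hGH₁ hGH₂
  obtain ⟨hL₁, hL₂⟩ := sq_sub_sq_mem_Icc (by positivity) (by linarith) hGH₁ hGH₂
  rw [show (p ^ 5 * q ^ 3) ^ 2 = p ^ 10 * q ^ 6 by ring] at hL₁ hL₂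
  have hGH₀ : 0 ≤ (G : ℝ) * H := by linarith [show 0 < p ^ 5 * q ^ 3 by positivity]
  refine ⟨G, H, hG₁, hG₂, hH₁, hH₂, by linarith, by linarith, ?_, ?_⟩
  · calc (p ^ 4 * q ^ 2 / 2) ^ 2 ≤ p ^ 3 * q / 2 * (p ^ 5 * q ^ 3) := by
          have : 0 ≤ p ^ 8 * q ^ 4 := by positivity
          linarith
      _ ≤ G * ((G : ℝ) * H) := mul_le_mul hG₁ (by linarith) (by positivity) (by linarith)
      _ ≤ _ := hL₁
  · calc ((G : ℝ) * H) ^ 2 - p ^ 10 * q ^ 6 ≤ 2 * (2 * G) * ((G : ℝ) * H) := hL₂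
      _ ≤ 2 * (2 * (p ^ 3 * q)) * (p ^ 5 * q ^ 3 + 2 * (p ^ 3 * q)) := by
          gcongr; linarith
      _ ≤ (4 * (p ^ 4 * q ^ 2)) ^ 2 := by
          have : p ^ 6 * q ^ 2 ≤ p ^ 8 * q ^ 4 := by gcongr <;> linarith
          nlinarith

lemma exists_first_correction (hp : 5 ≤ p) (hq : 0 < q) {H L : ℝ}
    (hH₁ : p ^ 2 * q ^ 2 ≤ H) (hH₂ : H ≤ 3 * (p ^ 2 * q ^ 2))
    (hL₁ : (p ^ 4 * q ^ 2 / 2) ^ 2 ≤ L) (hL₂ : L ≤ (4 * (p ^ 4 * q ^ 2)) ^ 2) :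
    ∃ g : ℤ, p ^ 2 / 12 ≤ g ∧ (g : ℝ) ≤ 4 * p ^ 2 ∧
      (p ^ 3 * q ^ 2 / 2) ^ 2 ≤ L - (g * H) ^ 2 ∧
      L - (g * H) ^ 2 ≤ (7 * (p ^ 3 * q ^ 2)) ^ 2 := by
  have hp₂ : 25 ≤ p ^ 2 := by nlinarith
  have hu : 0 < p ^ 2 * q ^ 2 := by positivity
  have hH₀ : 0 < H := hu.trans_le hH₁
  have hp₄ : p ^ 4 * q ^ 2 = p ^ 2 * (p ^ 2 * q ^ 2) := by ring
  -- The offset `1` keeps `L - (g * H) ^ 2 ≥ H * √L`, which is what makes `h ≍ q` later.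
  obtain ⟨g, hg₁, hg₂, hM₁, hM₂⟩ := exists_int_sq_sub_mul_sq_mem_Icc hH₀ 1
    (by rw [hp₄]; nlinarith) (by positivity) hL₁ hL₂
  push_cast at hg₁ hg₂ hM₁ hM₂
  refine ⟨g, ?_, ?_, ?_, ?_⟩
  · refine le_of_mul_le_mul_right ?_ hH₀
    rw [hp₄] at hg₁
    nlinarith
  · refine le_of_mul_le_mul_right ?_ hH₀
    rw [hp₄] at hg₂
    nlinarith
  · have : p ^ 6 * q ^ 4 = p ^ 2 * q ^ 2 * (p ^ 4 * q ^ 2) := by ring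
    nlinarith [show 0 ≤ p ^ 6 * q ^ 4 by positivity]
  · have : p ^ 6 * q ^ 4 = p ^ 2 * q ^ 2 * (p ^ 4 * q ^ 2) := by ring
    nlinarith [show 0 ≤ p ^ 6 * q ^ 4 by positivity]

lemma exists_second_correction (hp : 0 < p) (hq : 4 ≤ q) {G M : ℝ}
    (hG₁ : p ^ 3 * q / 2 ≤ G) (hG₂ : G ≤ p ^ 3 * q)
    (hM₁ : (p ^ 3 * q ^ 2 / 2) ^ 2 ≤ M) (hM₂ : M ≤ (7 * (p ^ 3 * q ^ 2)) ^ 2) :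
    ∃ h : ℤ, q / 4 ≤ h ∧ (h : ℝ) ≤ 14 * q ∧
      0 ≤ M - (h * G) ^ 2 ∧ M - (h * G) ^ 2 ≤ 14 * (p ^ 6 * q ^ 3) := by
  have ha : 0 < p ^ 3 * q := by positivity
  have hG₀ : 0 < G := by linarith
  have hp₃ : p ^ 3 * q ^ 2 = p ^ 3 * q * q := by ring
  obtain ⟨h, hh₁, hh₂, hN₁, hN₂⟩ := exists_int_sq_sub_mul_sq_mem_Icc hG₀ 0
    (by rw [hp₃]; nlinarith) (by positivity) hM₁ hM₂
  push_cast at hh₁ hh₂ hN₁ hN₂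
  refine ⟨h, ?_, ?_, by linarith, ?_⟩
  · refine le_of_mul_le_mul_right ?_ hG₀
    rw [hp₃] at hh₁
    nlinarith
  · refine le_of_mul_le_mul_right ?_ hG₀
    rw [hp₃] at hh₂
    nlinarith
  · have : p ^ 6 * q ^ 3 = p ^ 3 * q * (p ^ 3 * q ^ 2) := by ring
    nlinarith [show 0 ≤ p ^ 3 * q ^ 2 by positivity]

lemma pow_mul_pow_le_pow_mul_pow (hp : 1 ≤ p) (hq : 1 ≤ q) {a b c d : ℕ} (hac : a ≤ c)
    (hbd : b ≤ d) : p ^ a * q ^ b ≤ p ^ c * q ^ d :=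
  mul_le_mul (pow_le_pow_right₀ hp hac) (pow_le_pow_right₀ hq hbd) (by positivity)
    (by positivity)

lemma type2_error_bounds (hp : 1 ≤ p) (hq : 1 ≤ q) {G H g h : ℝ} (hG₀ : 0 ≤ G)
    (hG : G ≤ p ^ 3 * q) (hH₀ : 0 ≤ H) (hH : H ≤ 3 * (p ^ 2 * q ^ 2)) (hg₀ : 0 ≤ g)
    (hg : g ≤ 4 * p ^ 2) (hh₀ : 0 ≤ h) (hh : h ≤ 14 * q) (hGH₁ : 0 ≤ G * H - p ^ 5 * q ^ 3)
    (hGH₂ : G * H - p ^ 5 * q ^ 3 ≤ 2 * (p ^ 3 * q))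
    (hN₁ : 0 ≤ (G * H) ^ 2 - p ^ 10 * q ^ 6 - (g * H) ^ 2 - (h * G) ^ 2)
    (hN₂ : (G * H) ^ 2 - p ^ 10 * q ^ 6 - (g * H) ^ 2 - (h * G) ^ 2 ≤ 14 * (p ^ 6 * q ^ 3)) :
    |p ^ 10 * q ^ 6 - (G - g) * (G + g) * ((H - h) * (H + h))| ≤ 3150 * (p ^ 6 * q ^ 3) ∧
      |(G - g) * (H - h) - p ^ 5 * q ^ 3| ≤ 3150 * (p ^ 4 * q ^ 2) ∧
      |(G + g) * (H + h) - p ^ 5 * q ^ 3| ≤ 3150 * (p ^ 4 * q ^ 2) ∧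
      |(G - g) * (H + h) - p ^ 5 * q ^ 3| ≤ 3150 * (p ^ 4 * q ^ 2) ∧
      |(G + g) * (H - h) - p ^ 5 * q ^ 3| ≤ 3150 * (p ^ 4 * q ^ 2) := by
  have hgH₀ : 0 ≤ g * H := mul_nonneg hg₀ hH₀
  have hhG₀ : 0 ≤ h * G := mul_nonneg hh₀ hG₀
  have hgh₀ : 0 ≤ g * h := mul_nonneg hg₀ hh₀
  have hgH : g * H ≤ 12 * (p ^ 4 * q ^ 2) := by
    nlinarith [mul_le_mul hg hH hH₀ (by positivity)]
  have hhG : h * G ≤ 14 * (p ^ 4 * q ^ 2) := by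
    calc h * G ≤ 14 * q * (p ^ 3 * q) := mul_le_mul hh hG hG₀ (by positivity)
      _ = 14 * (p ^ 3 * q ^ 2) := by ring
      _ ≤ 14 * (p ^ 4 * q ^ 2) := by gcongr; norm_num
  have hgh : g * h ≤ 56 * (p ^ 2 * q) := by nlinarith [mul_le_mul hg hh hh₀ (by positivity)]
  have hp₂q : p ^ 2 * q ≤ p ^ 4 * q ^ 2 := by
    simpa using pow_mul_pow_le_pow_mul_pow (a := 2) (b := 1) hp hq (by norm_num) (by norm_num)
  have hp₃q : p ^ 3 * q ≤ p ^ 4 * q ^ 2 := by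
    simpa using pow_mul_pow_le_pow_mul_pow (a := 3) (b := 1) hp hq (by norm_num) (by norm_num)
  have hgh₂ : (g * h) ^ 2 ≤ 3136 * (p ^ 6 * q ^ 3) := by
    calc (g * h) ^ 2 ≤ (56 * (p ^ 2 * q)) ^ 2 := by gcongr
      _ = 3136 * (p ^ 4 * q ^ 2) := by ring
      _ ≤ 3136 * (p ^ 6 * q ^ 3) := by gcongr <;> norm_num
  have herr : p ^ 10 * q ^ 6 - (G - g) * (G + g) * ((H - h) * (H + h)) =
      -(((G * H) ^ 2 - p ^ 10 * q ^ 6 - (g * H) ^ 2 - (h * G) ^ 2) + (g * h) ^ 2) := by ring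
  refine ⟨?_, ?_, ?_, ?_, ?_⟩
  · rw [herr, abs_neg, abs_of_nonneg (by positivity)]
    linarith
  all_goals exact abs_le.mpr ⟨by linarith, by linarith⟩

lemma exists_type2_factors (hp : 5 ≤ p) (hq : 4 ≤ q) :
    ∃ G H g h : ℤ, 0 < G ∧ 0 < H ∧ 0 < g ∧ 0 < h ∧
      p ^ 3 * q / 2 ≤ (G : ℝ) ∧ (G : ℝ) ≤ p ^ 3 * q ∧
      p ^ 2 * q ^ 2 ≤ (H : ℝ) ∧ (H : ℝ) ≤ 3 * (p ^ 2 * q ^ 2) ∧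
      p ^ 2 / 3150 ≤ (g : ℝ) ∧ (g : ℝ) ≤ 3150 * p ^ 2 ∧
      q / 3150 ≤ (h : ℝ) ∧ (h : ℝ) ≤ 3150 * q ∧
      |p ^ 10 * q ^ 6 - ((G : ℝ) - g) * ((G : ℝ) + g) * (((H : ℝ) - h) * ((H : ℝ) + h))| ≤
        3150 * (p ^ 6 * q ^ 3) ∧
      |((G : ℝ) - g) * ((H : ℝ) - h) - p ^ 5 * q ^ 3| ≤ 3150 * (p ^ 4 * q ^ 2) ∧
      |((G : ℝ) + g) * ((H : ℝ) + h) - p ^ 5 * q ^ 3| ≤ 3150 * (p ^ 4 * q ^ 2) ∧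
      |((G : ℝ) - g) * ((H : ℝ) + h) - p ^ 5 * q ^ 3| ≤ 3150 * (p ^ 4 * q ^ 2) ∧
      |((G : ℝ) + g) * ((H : ℝ) - h) - p ^ 5 * q ^ 3| ≤ 3150 * (p ^ 4 * q ^ 2) := by
  have hp₀ : 0 < p := by linarith
  have hq₀ : 0 < q := by linarith
  obtain ⟨G, H, hG₁, hG₂, hH₁, hH₂, hGH₁, hGH₂, hL₁, hL₂⟩ := exists_outer_factors hp hq
  obtain ⟨g, hg₁, hg₂, hM₁, hM₂⟩ := exists_first_correction hp hq₀ hH₁ hH₂ hL₁ hL₂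
  obtain ⟨h, hh₁, hh₂, hN₁, hN₂⟩ := exists_second_correction hp₀ hq hG₁ hG₂ hM₁ hM₂
  have hG₀ : (0 : ℝ) < G := lt_of_lt_of_le (by positivity) hG₁
  have hH₀ : (0 : ℝ) < H := lt_of_lt_of_le (by positivity) hH₁
  have hg₀ : (0 : ℝ) < g := lt_of_lt_of_le (by positivity) hg₁
  have hh₀ : (0 : ℝ) < h := lt_of_lt_of_le (by positivity) hh₁
  refine ⟨G, H, g, h, by exact_mod_cast hG₀, by exact_mod_cast hH₀, by exact_mod_cast hg₀,
    by exact_mod_cast hh₀, hG₁, hG₂, hH₁, hH₂, by linarith [sq_nonneg p], by linarith,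
    by linarith, by linarith, type2_error_bounds (by linarith) (by linarith) hG₀.le hG₂ hH₀.le
      hH₂ hg₀.le hg₂ hh₀.le hh₂ hGH₁ hGH₂ (by linarith) (by linarith)⟩

end Monomials

theorem type2_construction_phi (φ : ℝ) (hφ1 : 1/2 < φ) (hφ2 : φ < 2/3) :
    ∃ C : ℝ, C > 0 ∧ ∃ x0 : ℝ, ∀ x : ℝ, x ≥ x0 →
      ∃ G H g h : ℤ, 0 < G ∧ 0 < H ∧ 0 < g ∧ 0 < h ∧
        x ^ ((1 - φ)/2) / 2 ≤ (G : ℝ) ∧ (G : ℝ) ≤ x ^ ((1 - φ)/2) ∧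
        x ^ (φ/2) ≤ (H : ℝ) ∧ (H : ℝ) ≤ 3 * x ^ (φ/2) ∧
        x ^ ((1:ℝ)/2 - 3*φ/4) / C ≤ (g : ℝ) ∧ (g : ℝ) ≤ C * x ^ ((1:ℝ)/2 - 3*φ/4) ∧
        x ^ (5*φ/8 - (1:ℝ)/4) / C ≤ (h : ℝ) ∧ (h : ℝ) ≤ C * x ^ (5*φ/8 - (1:ℝ)/4) ∧
        |x - ((G : ℝ) - g) * ((G : ℝ) + g) * (((H : ℝ) - h) * ((H : ℝ) + h))| ≤
          C * x ^ ((3:ℝ)/4 - 3*φ/8) ∧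
        |((G : ℝ) - g) * ((H : ℝ) - h) - x ^ ((1:ℝ)/2)| ≤ C * x ^ ((1:ℝ)/2 - φ/4) ∧
        |((G : ℝ) + g) * ((H : ℝ) + h) - x ^ ((1:ℝ)/2)| ≤ C * x ^ ((1:ℝ)/2 - φ/4) ∧
        |((G : ℝ) - g) * ((H : ℝ) + h) - x ^ ((1:ℝ)/2)| ≤ C * x ^ ((1:ℝ)/2 - φ/4) ∧
        |((G : ℝ) + g) * ((H : ℝ) - h) - x ^ ((1:ℝ)/2)| ≤ C * x ^ ((1:ℝ)/2 - φ/4) := by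
  have hs : 0 < (1 : ℝ) / 4 - 3 * φ / 8 := by linarith
  have ht : 0 < 5 * φ / 8 - (1 : ℝ) / 4 := by linarith
  obtain ⟨x₀, hx₀⟩ := eventually_atTop.mp <|
    ((tendsto_rpow_atTop hs).eventually_ge_atTop 5).and <|
      ((tendsto_rpow_atTop ht).eventually_ge_atTop 4).and (eventually_gt_atTop 0)
  refine ⟨3150, by norm_num, x₀, fun x hx => ?_⟩
  obtain ⟨hp, hq, hx⟩ := hx₀ x hx
  generalize hp_def : x ^ ((1 : ℝ) / 4 - 3 * φ / 8) = p at hp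
  generalize hq_def : x ^ (5 * φ / 8 - (1 : ℝ) / 4) = q at hq
  have monomial (a b : ℕ) (e : ℝ)
      (he : e = a * (1 / 4 - 3 * φ / 8) + b * (5 * φ / 8 - 1 / 4)) : x ^ e = p ^ a * q ^ b :=
    rpow_eq_pow_mul_pow hx hp_def hq_def a b he
  have hG : x ^ ((1 - φ) / 2) = p ^ 3 * q := by simpa using monomial 3 1 _ (by push_cast; ring)
  have hH : x ^ (φ / 2) = p ^ 2 * q ^ 2 := monomial 2 2 _ (by push_cast; ring)
  have hg : x ^ ((1 : ℝ) / 2 - 3 * φ / 4) = p ^ 2 := by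
    simpa using monomial 2 0 _ (by push_cast; ring)
  have herr : x ^ ((3 : ℝ) / 4 - 3 * φ / 8) = p ^ 6 * q ^ 3 := monomial 6 3 _ (by push_cast; ring)
  have hsqrt : x ^ ((1 : ℝ) / 2) = p ^ 5 * q ^ 3 := monomial 5 3 _ (by push_cast; ring)
  have hdev : x ^ ((1 : ℝ) / 2 - φ / 4) = p ^ 4 * q ^ 2 := monomial 4 2 _ (by push_cast; ring)
  have hx' : x = p ^ 10 * q ^ 6 := by rw [← monomial 10 6 1 (by push_cast; ring), rpow_one]
  rw [hG, hH, hg, herr, hsqrt, hdev, hx']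
  exact exists_type2_factors hp hq
end

section
/- For every θ with 1/3 < θ ≤ 1/2, there exist constants C', C'' > 0 such that for all sufficiently large real x the interval [x − C''·x^{1/2 + ε(θ)}, x + C''·x^{1/2 + ε(θ)}] contains a (θ, C')-almost square of type 2, where ε(θ) > 0 can be taken arbitrarily small; in particular g(θ) ≤ 1/2 for θ > 1/3. -/
open Filter

theorem exists_nat_mul_near {R : ℝ} (hR : 0 < R) {x : ℝ} (hx : 0 ≤ x) :
    ∃ N : ℕ, x ≤ R * N ∧ R * N ≤ x + R := by
  refine ⟨⌈x / R⌉₊, ?_, ?_⟩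
  · rw [← div_le_iff₀' hR]; exact Nat.le_ceil _
  · have := (Nat.ceil_lt_add_one (div_nonneg hx hR.le)).le
    rwa [← le_div_iff₀' hR, add_div, div_self hR.ne']

theorem exists_nat_mul_succ_near {h : ℝ} (hh : 1 ≤ h) :
    ∃ r : ℕ, 0 < r ∧ (2 * r + 1 : ℝ) ≤ 3 * h ∧
      h ^ 2 / 2 ≤ (r * (r + 1) : ℝ) ∧ (r * (r + 1) : ℝ) ≤ 2 * h ^ 2 := by
  have hr₁ : (1 : ℝ) ≤ ⌊h⌋₊ := by exact_mod_cast Nat.floor_pos.2 hh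
  have hr₂ := Nat.floor_le (zero_le_one.trans hh)
  have hr₃ := Nat.lt_floor_add_one h
  exact ⟨⌊h⌋₊, Nat.floor_pos.2 hh, by linarith, by nlinarith, by nlinarith⟩

theorem exists_sq_sub_sq_near (N : ℕ) :
    ∃ P j : ℕ, 0 < j ∧ j ^ 2 ≤ 4 * P ∧ P ≤ Nat.sqrt N + 2 ∧
      N + j ^ 2 ≤ P ^ 2 ∧ P ^ 2 ≤ N + j ^ 2 + 2 * j := by
  have hq₁ := Nat.sqrt_le' N
  have hq₂ := Nat.lt_succ_sqrt' N
  obtain ⟨D, hD⟩ : ∃ D, (Nat.sqrt N + 2) ^ 2 = N + D := Nat.exists_eq_add_of_le (by nlinarith)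
  have hj₁ := Nat.sqrt_le' D
  have hj₂ := Nat.lt_succ_sqrt' D
  refine ⟨Nat.sqrt N + 2, Nat.sqrt D, Nat.sqrt_pos.2 (by nlinarith), by nlinarith, le_rfl,
    by omega, by nlinarith⟩

theorem eventually_const_mul_rpow_le_rpow {a b : ℝ} (hab : a < b) (c : ℝ) :
    ∀ᶠ x : ℝ in atTop, c * x ^ a ≤ x ^ b := by
  filter_upwards [(tendsto_rpow_atTop (sub_pos.2 hab)).eventually_ge_atTop c,
    eventually_gt_atTop 0] with x hx hx₀
  calc c * x ^ a ≤ x ^ (b - a) * x ^ a := by gcongr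
    _ = x ^ b := by rw [← Real.rpow_add hx₀, sub_add_cancel]

def HasNestedFactorizations (n : ℤ) (w : ℝ) : Prop :=
  ∃ a₁ a₂ b₂ b₁ : ℤ, 0 < a₁ ∧ a₁ < a₂ ∧ a₂ ≤ b₂ ∧ b₂ < b₁ ∧
    n = a₁ * b₁ ∧ n = a₂ * b₂ ∧ ((b₁ - a₁ : ℤ) : ℝ) ≤ w

namespace HasNestedFactorizations

variable {n : ℤ} {w : ℝ}

theorem mono (h : HasNestedFactorizations n w) {w' : ℝ} (hw : w ≤ w') :
    HasNestedFactorizations n w' := by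
  obtain ⟨a₁, a₂, b₂, b₁, h₀, h₁, h₂, h₃, e₁, e₂, hw₁⟩ := h
  exact ⟨a₁, a₂, b₂, b₁, h₀, h₁, h₂, h₃, e₁, e₂, hw₁.trans hw⟩

theorem almostSquareType2 {θ C : ℝ} (h : HasNestedFactorizations n (C * (n : ℝ) ^ θ)) :
    AlmostSquareType2 n θ C := by
  obtain ⟨a₁, a₂, b₂, b₁, h₀, h₁, h₂, h₃, e₁, e₂, hw⟩ := h
  refine ⟨a₁, a₂, b₂, b₁, h₁, h₂, h₃, e₁, e₂, fun c hc => ?_⟩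
  have hc' : a₁ ≤ c ∧ c ≤ b₁ := by
    simp only [Set.mem_insert_iff, Set.mem_singleton_iff] at hc
    omega
  have ha : (0 : ℝ) ≤ a₁ := by exact_mod_cast h₀.le
  have hab : (a₁ : ℝ) ≤ b₁ := by exact_mod_cast (by omega : a₁ ≤ b₁)
  have hb : (0 : ℝ) ≤ b₁ := ha.trans hab
  have hn : (n : ℝ) = a₁ * b₁ := by exact_mod_cast e₁
  have hlo : (a₁ : ℝ) ≤ (n : ℝ) ^ ((1 : ℝ) / 2) := by
    rw [← Real.sqrt_eq_rpow, hn]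
    calc (a₁ : ℝ) = √(a₁ * a₁) := (Real.sqrt_mul_self ha).symm
      _ ≤ √(a₁ * b₁) := Real.sqrt_le_sqrt (mul_le_mul_of_nonneg_left hab ha)
  have hhi : (n : ℝ) ^ ((1 : ℝ) / 2) ≤ b₁ := by
    rw [← Real.sqrt_eq_rpow, hn]
    calc √(a₁ * b₁ : ℝ) ≤ √(b₁ * b₁) := Real.sqrt_le_sqrt (mul_le_mul_of_nonneg_right hab hb)
      _ = b₁ := Real.sqrt_mul_self hb
  have hca : (a₁ : ℝ) ≤ c := by exact_mod_cast hc'.1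
  have hcb : (c : ℝ) ≤ b₁ := by exact_mod_cast hc'.2
  push_cast at hw
  constructor <;> linarith

end HasNestedFactorizations

theorem hasNestedFactorizations_mul_sq_sub_sq {r P j : ℤ} (hr : 0 < r) (hj : 0 < j)
    (hjP : (2 * r + 1) * j ≤ P) :
    HasNestedFactorizations (r * (r + 1) * (P ^ 2 - j ^ 2)) ((P + (2 * r + 1) * j : ℤ) : ℝ) := by
  have hPj : j < P := by nlinarith
  refine ⟨r * (P - j), r * (P + j), (r + 1) * (P - j), (r + 1) * (P + j), by nlinarith,
    by nlinarith, by nlinarith, by nlinarith, by ring, by ring, le_of_eq (by push_cast; ring)⟩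

theorem exists_hasNestedFactorizations_near {h s : ℝ} (hh : 1 ≤ h) (hs : 576 * h ^ 2 ≤ s) :
    ∃ n : ℤ, (h * s) ^ 2 ≤ n ∧ (n : ℝ) ≤ (h * s) ^ 2 + 3 * (h * s) ∧
      HasNestedFactorizations n (8 * s) := by
  obtain ⟨r, hr, hr₃, hRlo, hRhi⟩ := exists_nat_mul_succ_near hh
  set R : ℝ := r * (r + 1)
  have hR : 0 < R := by positivity
  obtain ⟨N, hxN, hNx⟩ := exists_nat_mul_near hR (sq_nonneg (h * s))
  obtain ⟨P, j, hj, hjP, hPN, hlo, hhi⟩ := exists_sq_sub_sq_near N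
  have hh₂ : 2 * h ≤ s := by nlinarith
  have hP : (P : ℝ) ≤ 4 * s := by
    have : (P : ℝ) ≤ Nat.sqrt N + 2 := by exact_mod_cast hPN
    have : (Nat.sqrt N : ℝ) ≤ 2 * s := by
      refine (pow_le_pow_iff_left₀ (Nat.cast_nonneg _) (by linarith) two_ne_zero).1 ?_
      have hq : ((Nat.sqrt N : ℕ) : ℝ) ^ 2 ≤ N := by exact_mod_cast Nat.sqrt_le' N
      have : h ^ 2 * N ≤ h ^ 2 * (2 * s) ^ 2 := by
        nlinarith [mul_le_mul_of_nonneg_right hRlo (Nat.cast_nonneg (α := ℝ) N),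
          mul_le_mul_of_nonneg_left (by nlinarith : (2 : ℝ) ≤ s ^ 2) (sq_nonneg h)]
      nlinarith [le_of_mul_le_mul_left this (by positivity)]
    linarith
  have hj₂ : (j : ℝ) ^ 2 ≤ 16 * s := by
    have : (j : ℝ) ^ 2 ≤ 4 * P := by exact_mod_cast hjP
    linarith
  have hPs : s ^ 2 ≤ 2 * (P : ℝ) ^ 2 := by
    have : (N : ℝ) + j ^ 2 ≤ P ^ 2 := by exact_mod_cast hlo
    have : h ^ 2 * s ^ 2 ≤ h ^ 2 * (2 * N) := by
      nlinarith [mul_le_mul_of_nonneg_right hRhi (Nat.cast_nonneg (α := ℝ) N)]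
    nlinarith [le_of_mul_le_mul_left this (by positivity)]
  -- `((2r + 1) j)² ≤ 9h² · 16s ≤ s²/4 < P²`: this is where `576 h² ≤ s` comes from.
  have hjK : ((2 * r + 1) * j : ℝ) ≤ P := by
    refine (pow_le_pow_iff_left₀ (by positivity) (Nat.cast_nonneg _) two_ne_zero).1 ?_
    have : (2 * r + 1 : ℝ) ^ 2 ≤ 9 * h ^ 2 := by nlinarith
    nlinarith [mul_le_mul this hj₂ (by positivity) (by positivity)]
  have hRj : R * j ≤ h * s := by
    refine (pow_le_pow_iff_left₀ (mul_nonneg hR.le (Nat.cast_nonneg _)) (by nlinarith)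
      two_ne_zero).1 ?_
    have : R ^ 2 ≤ 4 * h ^ 4 := by nlinarith
    nlinarith [mul_le_mul this hj₂ (by positivity) (by positivity)]
  have hRs : R ≤ h * s := by nlinarith
  have hnest := hasNestedFactorizations_mul_sq_sub_sq (r := r) (P := P) (j := j)
    (by exact_mod_cast hr) (by exact_mod_cast hj) (by exact_mod_cast hjK)
  have hlo' : (N : ℝ) + j ^ 2 ≤ P ^ 2 := by exact_mod_cast hlo
  have hhi' : (P : ℝ) ^ 2 ≤ N + j ^ 2 + 2 * j := by exact_mod_cast hhi
  refine ⟨r * (r + 1) * (P ^ 2 - j ^ 2), ?_, ?_, hnest.mono ?_⟩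
  · push_cast
    nlinarith [mul_le_mul_of_nonneg_left hlo' hR.le]
  · push_cast
    nlinarith [mul_le_mul_of_nonneg_left hhi' hR.le]
  · push_cast
    linarith

theorem g_le_half_beyond_third (θ : ℝ) (hθ1 : 1/3 < θ) (hθ2 : θ ≤ 1/2)
    (ε : ℝ) (hε : ε > 0) :
    ∃ C' C'' : ℝ, C' > 0 ∧ C'' > 0 ∧ ∃ x0 : ℝ, ∀ x : ℝ, x ≥ x0 →
      ∃ n : ℤ, |(n : ℝ) - x| ≤ C'' * x ^ ((1:ℝ)/2 + ε) ∧ AlmostSquareType2 n θ C' := by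
  refine ⟨8, 3, by norm_num, by norm_num, eventually_atTop.1 ?_⟩
  filter_upwards [eventually_ge_atTop 1,
    eventually_const_mul_rpow_le_rpow (by linarith : 1 - 2 * θ < θ) 576] with x hx₁ hx
  have hx₀ : 0 ≤ x := by linarith
  have hh : (x ^ (1 / 2 - θ)) ^ 2 = x ^ (1 - 2 * θ) := by
    rw [← Real.rpow_natCast, ← Real.rpow_mul hx₀]; ring_nf
  have hhs : x ^ (1 / 2 - θ) * x ^ θ = √x := by
    rw [← Real.rpow_add (by linarith), Real.sqrt_eq_rpow, sub_add_cancel]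
  obtain ⟨n, hxn, hnx, hn⟩ := exists_hasNestedFactorizations_near (s := x ^ θ)
    (Real.one_le_rpow hx₁ (by linarith : 0 ≤ 1 / 2 - θ)) (by rwa [hh])
  rw [hhs, Real.sq_sqrt hx₀] at hxn hnx
  have hsqrt : √x ≤ x ^ ((1 : ℝ) / 2 + ε) := by
    rw [Real.sqrt_eq_rpow]; exact Real.rpow_le_rpow_of_exponent_le hx₁ (by linarith)
  refine ⟨n, abs_le.2 ⟨by linarith, by linarith⟩, (hn.mono ?_).almostSquareType2⟩
  gcongr
end
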